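/- arXiv:2601.06813 — 3 statements merged into one kernel-verified Lean document; each statement's English description precedes it below -/
import Mathlib

section
/- Let $\mathcal{I}$ be a countable set, $\emptyset = \Theta_0 \subseteq \Theta_1 \subseteq \cdots \subseteq \Theta_{n+1} = \mathcal{I}$ with each $\Theta_i \setminus \Theta_{i-1}$ nonempty, and $\rho : \mathcal{I} \to \mathbb{R}_{\ge 0}$ bounded with $c_i = \sup_{I \in \Theta_i} \rho(I)$. Let $1 = \delta_0 \ge \delta_1 \ge \cdots \ge \delta_n \ge \delta_{n+1} = 0$. Then for every $\varepsilon > 0$ there exists a probability distribution $d$ on $\mathcal{I}$ satisfying $\Pr_{I \sim d}[I \in \Theta_i] \ge 1 - \delta_i$ for all $i \in [n]$ and $\mathbb{E}_{I \sim d}[\rho(I)] \ge (1-\varepsilon)\left(\sum_{i=1}^{n} (\delta_{i-1}-\delta_i) c_i + \delta_n c_{n+1}\right)$. -/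
/-- Lower bound direction of the convex-combination representation of the DRCR
with hierarchical predictions: for every `ε > 0` there is a distribution
consistent with the prediction profile whose expected cost ratio is at least
`(1 - ε)` times the convex combination. -/
theorem drcr_hierarchical_lower_bound {I : Type*} [Countable I] (n : ℕ) (hn : 1 ≤ n)
    (Θ : ℕ → Set I) (hΘ0 : Θ 0 = ∅) (hΘtop : Θ (n + 1) = Set.univ)
    (hnested : ∀ i, i ≤ n → Θ i ⊆ Θ (i + 1))
    (hdiff : ∀ i, 1 ≤ i → i ≤ n + 1 → (Θ i \ Θ (i - 1)).Nonempty)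
    (ρ : I → ℝ) (hρ0 : ∀ x, 0 ≤ ρ x) (hρbdd : BddAbove (Set.range ρ))
    (c : ℕ → ℝ) (hc : ∀ i, 1 ≤ i → i ≤ n + 1 → c i = sSup (ρ '' Θ i))
    (δ : ℕ → ℝ) (hδ0 : δ 0 = 1) (hδlast : δ (n + 1) = 0)
    (hδchain : ∀ i, i ≤ n → δ (i + 1) ≤ δ i) (hδn : 0 ≤ δ n) :
    ∀ ε > (0 : ℝ), ∃ d : I → ℝ,
      (∀ x, 0 ≤ d x) ∧ HasSum d 1 ∧
      (∀ i, 1 ≤ i → i ≤ n → 1 - δ i ≤ ∑' x : Θ i, d x) ∧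
      (1 - ε) * ((∑ i ∈ Finset.Icc 1 n, (δ (i - 1) - δ i) * c i) + δ n * c (n + 1)) ≤
        ∑' x, d x * ρ x := by
  intro ε hε
  classical
  -- monotonicity of Θ
  have Θmono : ∀ j, j ≤ n + 1 → ∀ i, i ≤ j → Θ i ⊆ Θ j := by
    intro j
    induction j with
    | zero => intro _ i hi; interval_cases i; exact subset_rfl
    | succ k ih =>
      intro hk i hi
      rcases Nat.eq_or_lt_of_le hi with h | h
      · subst h; exact subset_rfl
      · exact (ih (by omega) i (by omega)).trans (hnested k (by omega))
  have hΘne : ∀ i, 1 ≤ i → i ≤ n + 1 → (Θ i).Nonempty := by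
    intro i h1 h2
    obtain ⟨x, hx, -⟩ := hdiff i h1 h2
    exact ⟨x, hx⟩
  have hcnn : ∀ i, 1 ≤ i → i ≤ n + 1 → 0 ≤ c i := by
    intro i h1 h2
    obtain ⟨x, hx⟩ := hΘne i h1 h2
    rw [hc i h1 h2]
    exact le_trans (hρ0 x)
      (le_csSup (hρbdd.mono (Set.image_subset_range _ _)) ⟨x, hx, rfl⟩)
  -- choose near-sup points
  obtain ⟨x₀, hx₀, -⟩ := hdiff (n + 1) (by omega) le_rfl
  have key : ∀ i, ∃ p : I, 1 ≤ i → i ≤ n + 1 → p ∈ Θ i ∧ (1 - ε) * c i ≤ ρ p := by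
    intro i
    by_cases h : 1 ≤ i ∧ i ≤ n + 1
    · obtain ⟨h1, h2⟩ := h
      rcases eq_or_lt_of_le (hcnn i h1 h2) with hc0 | hcpos
      · obtain ⟨p, hp⟩ := hΘne i h1 h2
        exact ⟨p, fun _ _ => ⟨hp, by nlinarith [hρ0 p]⟩⟩
      · have hlt : (1 - ε) * c i < c i := by nlinarith
        rw [hc i h1 h2] at hlt
        obtain ⟨y, hyS, hy⟩ :=
          exists_lt_of_lt_csSup (Set.Nonempty.image ρ (hΘne i h1 h2)) hlt
        obtain ⟨p, hpΘ, rfl⟩ := hyS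
        refine ⟨p, fun _ _ => ⟨hpΘ, ?_⟩⟩
        rw [hc i h1 h2]
        exact hy.le
    · exact ⟨x₀, fun h1 h2 => absurd ⟨h1, h2⟩ h⟩
  choose pt hpt using key
  set F := Finset.Icc 1 (n + 1) with hF
  set w : ℕ → ℝ := fun i => if i = n + 1 then δ n else δ (i - 1) - δ i with hw
  have hw_nonneg : ∀ i ∈ F, 0 ≤ w i := by
    intro i hi
    simp only [hF, Finset.mem_Icc] at hi
    simp only [hw]
    split
    · exact hδn
    · have h2 : i - 1 + 1 = i := by omega
      have := hδchain (i - 1) (by omega)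
      rw [h2] at this
      linarith
  have tel : ∀ m, ∑ i ∈ Finset.Icc 1 m, (δ (i - 1) - δ i) = δ 0 - δ m := by
    intro m
    induction m with
    | zero => simp
    | succ k ih =>
      rw [Finset.sum_Icc_succ_top (by omega), ih]
      simp only [Nat.add_sub_cancel]
      ring
  have hws_eq : ∑ i ∈ Finset.Icc 1 n, w i = ∑ i ∈ Finset.Icc 1 n, (δ (i - 1) - δ i) := by
    apply Finset.sum_congr rfl
    intro i hi
    simp only [Finset.mem_Icc] at hi
    simp only [hw]
    rw [if_neg (by omega)]
  have hwsum : ∑ i ∈ F, w i = 1 := by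
    rw [hF, Finset.sum_Icc_succ_top (by omega : 1 ≤ n + 1), hws_eq, tel]
    simp [hw, hδ0]
  refine ⟨fun x => ∑ i ∈ F, w i * (if x = pt i then 1 else 0), ?_, ?_, ?_, ?_⟩
  · intro x
    apply Finset.sum_nonneg
    intro i hi
    apply mul_nonneg (hw_nonneg i hi)
    split <;> norm_num
  · have h1 : HasSum (fun x => ∑ i ∈ F, w i * (if x = pt i then 1 else 0))
        (∑ i ∈ F, w i * 1) :=
      hasSum_sum fun i _ => (hasSum_ite_eq (pt i) 1).mul_left (w i)
    simpa [mul_one, hwsum] using h1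
  · intro j hj1 hjn
    have hs : HasSum (fun y : Θ j => ∑ i ∈ F, w i * (if (y : I) = pt i then 1 else 0))
        (∑ i ∈ F, w i * (if pt i ∈ Θ j then 1 else 0)) := by
      apply hasSum_sum
      intro i _
      by_cases h : pt i ∈ Θ j
      · rw [if_pos h]
        have heq : (fun y : Θ j => w i * (if (y : I) = pt i then 1 else 0)) =
            fun y : Θ j => w i * (if y = (⟨pt i, h⟩ : Θ j) then 1 else 0) := by
          funext y; congr 1; simp [Subtype.ext_iff]
        rw [heq]
        exact (hasSum_ite_eq _ 1).mul_left (w i)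
      · rw [if_neg h, mul_zero]
        have heq : (fun y : Θ j => w i * (if (y : I) = pt i then 1 else 0)) =
            fun _ => (0 : ℝ) := by
          funext y
          rw [if_neg, mul_zero]
          intro hy
          exact h (hy ▸ y.2)
        rw [heq]
        exact hasSum_zero
    rw [hs.tsum_eq]
    calc 1 - δ j = ∑ i ∈ Finset.Icc 1 j, (δ (i - 1) - δ i) := by rw [tel, hδ0]
      _ = ∑ i ∈ Finset.Icc 1 j, w i * (if pt i ∈ Θ j then 1 else 0) := by
          apply Finset.sum_congr rfl
          intro i hi
          simp only [Finset.mem_Icc] at hi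
          have hmem : pt i ∈ Θ j :=
            Θmono j (by omega) i hi.2 ((hpt i hi.1 (by omega)).1)
          rw [if_pos hmem, mul_one, hw]
          simp only
          rw [if_neg (by omega)]
      _ ≤ ∑ i ∈ F, w i * (if pt i ∈ Θ j then 1 else 0) := by
          apply Finset.sum_le_sum_of_subset_of_nonneg
          · rw [hF]; exact Finset.Icc_subset_Icc_right (by omega)
          · intro i hi _
            apply mul_nonneg (hw_nonneg i hi)
            split <;> norm_num
  · have heq : (fun x => (∑ i ∈ F, w i * (if x = pt i then 1 else 0)) * ρ x) =
        fun x => ∑ i ∈ F, (w i * ρ (pt i)) * (if x = pt i then 1 else 0) := by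
      funext x
      rw [Finset.sum_mul]
      apply Finset.sum_congr rfl
      intro i _
      by_cases h : x = pt i
      · subst h; simp
      · simp [h]
    have hsE : HasSum (fun x => (∑ i ∈ F, w i * (if x = pt i then 1 else 0)) * ρ x)
        (∑ i ∈ F, w i * ρ (pt i)) := by
      rw [heq]
      have := hasSum_sum fun i (_ : i ∈ F) =>
        (hasSum_ite_eq (pt i) 1).mul_left (w i * ρ (pt i))
      simpa using this
    rw [hsE.tsum_eq]
    have hsplit : ∑ i ∈ F, w i * ρ (pt i) =
        ∑ i ∈ Finset.Icc 1 n, w i * ρ (pt i) + w (n + 1) * ρ (pt (n + 1)) := by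
      rw [hF, Finset.sum_Icc_succ_top (by omega : 1 ≤ n + 1)]
    have hexp : (1 - ε) * ((∑ i ∈ Finset.Icc 1 n, (δ (i - 1) - δ i) * c i) + δ n * c (n + 1)) =
        ∑ i ∈ Finset.Icc 1 n, (δ (i - 1) - δ i) * ((1 - ε) * c i) +
          δ n * ((1 - ε) * c (n + 1)) := by
      rw [mul_add, Finset.mul_sum]
      congr 1
      · exact Finset.sum_congr rfl fun i _ => by ring
      · ring
    rw [hexp, hsplit]
    apply add_le_add
    · apply Finset.sum_le_sum
      intro i hi
      simp only [Finset.mem_Icc] at hi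
      have hwi : w i = δ (i - 1) - δ i := by
        simp only [hw]; rw [if_neg (by omega)]
      rw [hwi]
      have hwnn : 0 ≤ δ (i - 1) - δ i := by
        have := hw_nonneg i (by simp [hF, Finset.mem_Icc]; omega)
        rwa [hwi] at this
      exact mul_le_mul_of_nonneg_left ((hpt i hi.1 (by omega)).2) hwnn
    · have hwn1 : w (n + 1) = δ n := by simp [hw]
      rw [hwn1]
      exact mul_le_mul_of_nonneg_left ((hpt (n + 1) (by omega) le_rfl).2) hδn
end

section
/- Let $B \ge 2$ be an integer. Then $\frac{B^B}{B^B - (B-1)^B} < 2 - \frac{1}{B}$, i.e., the optimal randomized competitive ratio for ski rental is strictly better than the optimal deterministic competitive ratio. -/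
/-!
With `B = m + 1`, clearing denominators turns the claim into
`(2m + 1) m^(m+1) < m (m+1)^(m+1)`. Bernoulli's inequality gives
`(m+1)^m ≥ m^m + m · m^(m-1) = 2 m^m`, hence `(m+1)^(m+1) ≥ (2m + 2) m^m`, which is more than
enough.
-/

theorem Nat.two_mul_pow_self_le_succ_pow_self {m : ℕ} (hm : 0 < m) :
    2 * m ^ m ≤ (m + 1) ^ m := by
  have bernoulli := pow_add_mul_le_add_pow (Nat.zero_le m) (Nat.zero_le _) m (b := 1)
  rwa [mul_one, Nat.cast_id, mul_pow_sub_one hm.ne', ← two_mul] at bernoulli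

theorem Nat.two_mul_add_one_mul_pow_succ_lt {m : ℕ} (hm : 0 < m) :
    (2 * m + 1) * m ^ (m + 1) < m * (m + 1) ^ (m + 1) := by
  have hpow : 0 < m ^ m := Nat.pow_pos hm
  calc (2 * m + 1) * m ^ (m + 1) = m * ((2 * m + 1) * m ^ m) := by ring
    _ < m * ((2 * m + 1) * m ^ m + m ^ m) := by gcongr; exact Nat.lt_add_of_pos_right hpow
    _ = m * ((m + 1) * (2 * m ^ m)) := by ring
    _ ≤ m * ((m + 1) * (m + 1) ^ m) := by gcongr; exact Nat.two_mul_pow_self_le_succ_pow_self hm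
    _ = m * (m + 1) ^ (m + 1) := by ring

/-- The optimal randomized competitive ratio for ski rental is strictly better
than the optimal deterministic competitive ratio `2 - 1/B`. -/
theorem ski_rental_randomized_beats_deterministic (B : ℕ) (hB : 2 ≤ B) :
    (B : ℝ) ^ B / ((B : ℝ) ^ B - ((B : ℝ) - 1) ^ B) < 2 - 1 / (B : ℝ) := by
  obtain ⟨m, rfl⟩ : ∃ m, B = m + 1 := ⟨B - 1, by omega⟩
  have key : (2 * m + 1) * (m : ℝ) ^ (m + 1) < m * (m + 1) ^ (m + 1) := by
    exact_mod_cast Nat.two_mul_add_one_mul_pow_succ_lt (by omega)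
  have hden : 0 < ((m : ℝ) + 1) ^ (m + 1) - (m : ℝ) ^ (m + 1) :=
    sub_pos.2 (pow_lt_pow_left₀ (lt_add_one _) m.cast_nonneg (by omega))
  push_cast
  rw [add_sub_cancel_right, div_lt_iff₀ hden,
    show 2 - 1 / ((m : ℝ) + 1) = (2 * m + 1) / (m + 1) by field_simp; ring,
    div_mul_eq_mul_div, lt_div_iff₀ (by positivity)]
  linear_combination key
end

section
/- In the ski rental problem with integer buy cost $B \ge 2$, let $(f_t)_{t\ge1}$ be a purchase-day distribution with $\sum_t f_t = 1$ and let $\tau^* \ge 1$. Define $\hat f$ by moving the mass of day $\tau^*+1$ onto day $\tau^*$: $\hat f_{\tau^*} = f_{\tau^*} + f_{\tau^*+1}$, $\hat f_{\tau^*+1} = 0$, $\hat f_t = f_t$ otherwise. Let $L_f(\tau)$ and $L_{\hat f}(\tau)$ denote the respective expected costs on duration $\tau$. Then: (i) $L_{\hat f}(\tau) = L_f(\tau)$ for $\tau \le \tau^* - 1$; (ii) $L_{\hat f}(\tau) = L_f(\tau) - f_{\tau^*+1} \le L_f(\tau)$ for $\tau \ge \tau^*+1$; and (iii) $L_{\hat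 f}(\tau^*) \le L_{\hat f}(\tau^*+1)$. -/
lemma two_point_sum (s : Finset ℕ) (a b : ℕ) (hab : a ≠ b) (ha : a ∈ s) (hb : b ∈ s)
    (x y : ℝ) :
    ∑ t ∈ s, (if t = a then x else if t = b then y else 0) = x + y := by
  have h : ∀ t ∈ s, (if t = a then x else if t = b then y else 0) =
      (if t = a then x else 0) + (if t = b then y else 0) := by
    intro t _
    split_ifs with h1 h2 <;> simp_all
  rw [Finset.sum_congr rfl h, Finset.sum_add_distrib,
    Finset.sum_ite_eq' s a (fun _ => x), Finset.sum_ite_eq' s b (fun _ => y),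
    if_pos ha, if_pos hb]

/-- Mass-shifting lemma: moving the purchase probability of day `τ* + 1` onto
day `τ*` never increases the expected cost, except at `τ*` itself, where it is
controlled by the value at `τ* + 1`. -/
theorem ski_rental_mass_shift (B : ℕ) (hB : 2 ≤ B) (f : ℕ → ℝ)
    (hf0 : ∀ t, 0 ≤ f t) (hfsum : Summable f) (hf1 : ∑' t, f t = 1)
    (τstar : ℕ) (hτstar : 1 ≤ τstar)
    (fhat : ℕ → ℝ)
    (hfhat : ∀ t, fhat t =
      if t = τstar then f τstar + f (τstar + 1)
      else if t = τstar + 1 then 0 else f t)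
    (Lf Lfhat : ℕ → ℝ)
    (hLf : ∀ τ, Lf τ = (∑ t ∈ Finset.Icc 1 τ, ((t : ℝ) - 1 + B) * f t) +
        (τ : ℝ) * (1 - ∑ t ∈ Finset.Icc 1 τ, f t))
    (hLfhat : ∀ τ, Lfhat τ = (∑ t ∈ Finset.Icc 1 τ, ((t : ℝ) - 1 + B) * fhat t) +
        (τ : ℝ) * (1 - ∑ t ∈ Finset.Icc 1 τ, fhat t)) :
    (∀ τ : ℕ, 1 ≤ τ → τ ≤ τstar - 1 → Lfhat τ = Lf τ) ∧
      (∀ τ : ℕ, τstar + 1 ≤ τ → Lfhat τ = Lf τ - f (τstar + 1) ∧ Lfhat τ ≤ Lf τ) ∧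
      Lfhat τstar ≤ Lfhat (τstar + 1) := by
  have hne : τstar ≠ τstar + 1 := by omega
  -- general weighted shift identity for τ ≥ τstar + 1
  have key : ∀ (w : ℕ → ℝ) (τ : ℕ), τstar + 1 ≤ τ →
      ∑ t ∈ Finset.Icc 1 τ, w t * fhat t =
        ∑ t ∈ Finset.Icc 1 τ, w t * f t + (w τstar - w (τstar + 1)) * f (τstar + 1) := by
    intro w τ hτ
    have hm1 : τstar ∈ Finset.Icc 1 τ := by simp [Finset.mem_Icc]; omega
    have hm2 : τstar + 1 ∈ Finset.Icc 1 τ := by simp [Finset.mem_Icc]; omega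
    have hdiff : ∀ t ∈ Finset.Icc 1 τ, w t * fhat t - w t * f t =
        (if t = τstar then w τstar * f (τstar + 1)
          else if t = τstar + 1 then -(w (τstar + 1) * f (τstar + 1)) else 0) := by
      intro t _
      rw [hfhat t]
      split_ifs with h1 h2
      · subst h1; ring
      · subst h2; ring
      · ring
    have := Finset.sum_congr rfl hdiff
    rw [Finset.sum_sub_distrib] at this
    rw [two_point_sum _ _ _ hne hm1 hm2] at this
    linarith
  refine ⟨?_, ?_, ?_⟩
  · intro τ h1 h2
    rw [hLf, hLfhat]
    have : ∀ t ∈ Finset.Icc 1 τ, fhat t = f t := by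
      intro t ht
      simp only [Finset.mem_Icc] at ht
      rw [hfhat t, if_neg (by omega), if_neg (by omega)]
    rw [Finset.sum_congr rfl this,
      Finset.sum_congr rfl (fun t ht => by rw [this t ht])]
  · intro τ hτ
    have h1 := key (fun t => ((t : ℝ) - 1 + B)) τ hτ
    have h2 := key (fun _ => (1 : ℝ)) τ hτ
    simp only [one_mul, sub_self, zero_mul, add_zero] at h2
    have hc : ((τstar : ℝ) - 1 + B) - ((↑(τstar + 1) : ℝ) - 1 + B) = -1 := by
      push_cast; ring
    constructor
    · rw [hLf, hLfhat, h1, h2, hc]; ring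
    · rw [hLf, hLfhat, h1, h2, hc]
      have := hf0 (τstar + 1)
      nlinarith
  · -- part (iii)
    have hz : fhat (τstar + 1) = 0 := by rw [hfhat]; simp [hne.symm]
    have hS : ∑ t ∈ Finset.Icc 1 τstar, fhat t = ∑ t ∈ Finset.Icc 1 (τstar + 1), f t := by
      rw [Finset.sum_Icc_succ_top (by omega : 1 ≤ τstar + 1)]
      have : ∀ t ∈ Finset.Icc 1 τstar, fhat t =
          f t + (if t = τstar then f (τstar + 1) else 0) := by
        intro t ht
        simp only [Finset.mem_Icc] at ht
        rw [hfhat t]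
        split_ifs with h1 h2
        · subst h1; ring
        · omega
        · ring
      rw [Finset.sum_congr rfl this, Finset.sum_add_distrib,
        Finset.sum_ite_eq' _ τstar (fun _ => f (τstar + 1)),
        if_pos (by simp [Finset.mem_Icc]; omega)]
    have hSle : ∑ t ∈ Finset.Icc 1 τstar, fhat t ≤ 1 := by
      rw [hS, ← hf1]
      exact Summable.sum_le_tsum _ (fun i _ => hf0 i) hfsum
    rw [hLfhat τstar, hLfhat (τstar + 1),
      Finset.sum_Icc_succ_top (by omega : 1 ≤ τstar + 1),
      Finset.sum_Icc_succ_top (by omega : 1 ≤ τstar + 1), hz]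
    push_cast
    nlinarith [hSle]
end
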